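/- Let k ∈ ℂ and let p, q ∈ ℂ[X] be nonzero polynomials that are squarefree and coprime. Then the following are equivalent: (i) there exist a, b ∈ ℂ[X] with b ≠ 0 and ((a'·b − a·b') + k·a·b)·q² = p·b², and there exist c, d ∈ ℂ[X] with d ≠ 0 and ((c'·d − c·d') − 2k·c·d)·p² = q⁴·d²; (ii) {p,q}_2 + 2k·(p'·q − 2·q'·p) = 0. (Condition (i) expresses that exp(−kz)∫(p/q²)e^{kz}dz and exp(2kz)∫(q⁴/p²)e^{−2kz}dz are rational functions: a rational f satisfies f' + kf = p/q² iff the first identity holds with f = a/b, and a rational g satisfies g' − 2kg = q⁴/p² iff the second holds with g = c/d.) -/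

import Mathlib

/-!
For coprime `r, s` with `s` squarefree, `f' + κ f = r / s²` has a rational solution iff the residue
of `e^{κz} r / s²` vanishes at every root of `s`. A reduced solution can only have simple poles, at
the roots of `s`, and then `s f` is regular there, which forces the residue to vanish; conversely,
a Bézout identity `x s + y s' = 1` turns vanishing residues into a solution `u / s`. As the roots of
`s` are simple, the residue condition is a divisibility by `s`. For the two equations of the theorem
these divisibilities say that `q` and `p` divide `W = {p,q}_2 + 2k(p'q - 2q'p)`, and since
`deg W < deg (p q)` this means `W = 0`.
-/

open Polynomial

namespace Polynomial

variable {K : Type*} [Field K]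

theorem exists_derivative_eq [CharZero K] (s : K[X]) : ∃ w : K[X], derivative w = s := by
  induction s using Polynomial.induction_on' with
  | add f g hf hg =>
    obtain ⟨wf, rfl⟩ := hf
    obtain ⟨wg, rfl⟩ := hg
    exact ⟨wf + wg, derivative_add⟩
  | monomial n a =>
    refine ⟨monomial (n + 1) (a / (n + 1)), ?_⟩
    rw [derivative_monomial, Nat.add_sub_cancel, Nat.cast_succ,
      div_mul_cancel₀ _ (Nat.cast_add_one_ne_zero n)]

theorem exists_derivative_add_C_mul_eq [CharZero K] (κ : K) (s : K[X]) :
    ∃ w : K[X], derivative w + C κ * w = s := by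
  rcases eq_or_ne κ 0 with rfl | hκ
  · simpa using exists_derivative_eq s
  have hκ' : C κ⁻¹ * C κ = 1 := by rw [← C_mul, inv_mul_cancel₀ hκ, C_1]
  suffices ∀ n (s : K[X]), derivative^[n] s = 0 → ∃ w : K[X], derivative w + C κ * w = s from
    this _ s (iterate_derivative_eq_zero s.natDegree.lt_succ_self)
  intro n
  induction n with
  | zero => exact fun s hs => ⟨0, by simp_all⟩
  | succ n ih =>
    intro s hs
    obtain ⟨w, hw⟩ := ih (derivative s) hs
    refine ⟨C κ⁻¹ * (s - w), ?_⟩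
    rw [derivative_C_mul, derivative_sub]
    linear_combination (-C κ⁻¹) * hw + s * hκ'

/-- At a simple root `α` of `s = (X - α) Q`, this evaluates to `Q(α)³ e^{-κα}` times the residue
of `e^{κz} r / s²` at `α`. -/
noncomputable def expResidue (κ : K) (r s : K[X]) : K[X] :=
  derivative r * derivative s - r * derivative (derivative s) + C κ * r * derivative s

theorem exists_eq_of_dvd_expResidue [CharZero K] {κ : K} {r s : K[X]}
    (hs : IsCoprime s (derivative s)) (h : s ∣ expResidue κ r s) :
    ∃ u : K[X], derivative u * s - u * derivative s + C κ * u * s = r := by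
  obtain ⟨x, y, hxy⟩ := hs
  have hxy' : derivative x * s + x * derivative s + derivative y * derivative s
      + y * derivative (derivative s) = 0 := by
    simpa [derivative_mul, add_assoc] using congrArg derivative hxy
  obtain ⟨T, hT⟩ := h
  -- With `u = s w - r y`, the equation reduces to `s (w' + κ w) = r' y + r y' + κ r y + r x`.
  obtain ⟨z, hz⟩ : s ∣ derivative r * y + r * derivative y + C κ * r * y + r * x := by
    refine (IsCoprime.pow_right ⟨x, y, hxy⟩ : IsCoprime s (derivative s ^ 2)).dvd_of_dvd_mul_left
      ⟨T - ((derivative r * x + r * derivative x) * derivative s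
        - r * x * derivative (derivative s) + C κ * r * x * derivative s), ?_⟩
    unfold expResidue at hT
    linear_combination hT + (derivative r * derivative s + C κ * r * derivative s
      - r * derivative (derivative s)) * hxy + r * derivative s * hxy'
  obtain ⟨w, hw⟩ := exists_derivative_add_C_mul_eq κ z
  refine ⟨s * w - r * y, ?_⟩
  rw [derivative_sub, derivative_mul, derivative_mul]
  linear_combination s ^ 2 * hw - s * hz + r * hxy

theorem isRoot_expResidue_of_regular {κ : K} {r s A B : K[X]} {α : K} (hs : s.IsRoot α)
    (hB : B.eval α ≠ 0)
    (h : (derivative A * B - A * derivative B) * s - A * B * derivative s + C κ * A * B * s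
      = r * B ^ 2) :
    (expResidue κ r s).IsRoot α := by
  have e₀ := congrArg (eval α) h
  have e₁ := congrArg (eval α) (congrArg derivative h)
  simp only [derivative_mul, derivative_sub, derivative_add, derivative_C, derivative_pow] at e₁
  simp only [eval_mul, eval_sub, eval_add, eval_pow, eval_C, eval_zero,
    hs.eq_zero] at e₀ e₁
  have e₀' : eval α r * eval α B + eval α A * eval α (derivative s) = 0 :=
    mul_left_cancel₀ hB (by linear_combination -e₀)
  refine (mul_eq_zero.mp (?_ : eval α B ^ 2 * _ = 0)).resolve_left (pow_ne_zero 2 hB)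
  simp only [expResidue, eval_mul, eval_sub, eval_add, eval_C]
  linear_combination (-eval α (derivative s)) * e₁
    - (eval α B * eval α (derivative (derivative s)) - κ * eval α B * eval α (derivative s)
      + 2 * eval α (derivative B) * eval α (derivative s)) * e₀'

theorem exists_eq_X_sub_C_mul_of_pole [CharZero K] {κ : K} {r Q a b : K[X]} {α : K}
    (hQ : Q.eval α ≠ 0) (hr : r.eval α ≠ 0) (hab : IsCoprime a b) (hb : b ≠ 0)
    (h : (derivative a * b - a * derivative b + C κ * a * b) * ((X - C α) * Q) ^ 2 = r * b ^ 2) :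
    ∃ B : K[X], b = (X - C α) * B ∧ B.eval α ≠ 0 := by
  have hbα : b.IsRoot α := by
    have := congrArg (eval α) h
    simp only [eval_mul, eval_pow, eval_sub, eval_add, eval_X, eval_C, sub_self] at this
    simpa [hr] using this
  have haα : a.eval α ≠ 0 := by
    simpa [hbα.eq_zero] using aeval_ne_zero_of_isCoprime hab α
  obtain ⟨B, hbB, hB⟩ := exists_eq_pow_rootMultiplicity_mul_and_not_dvd b hb α
  rw [dvd_iff_isRoot, IsRoot.def] at hB
  obtain ⟨n, hn⟩ := Nat.exists_eq_add_one.mpr ((rootMultiplicity_pos hb).mpr hbα)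
  rw [hn] at hbB
  subst hbB
  -- For `n > 0` the right side vanishes at `α` but the left side does not: the pole of order
  -- `n + 2` of `(a / b)'` cannot be matched by the double pole of `r / s²`.
  have hcancel : ((X - C α) * (derivative a * B - a * derivative B + C κ * a * B)
      - (C (n : K) + 1) * a * B) * Q ^ 2 = r * ((X - C α) ^ n * B ^ 2) := by
    refine mul_left_cancel₀ (pow_ne_zero (n + 2) (X_sub_C_ne_zero α)) ?_
    rw [derivative_mul, derivative_X_sub_C_pow, Nat.add_sub_cancel, Nat.cast_succ, C_add, C_1] at h
    linear_combination h
  obtain rfl : n = 0 := by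
    by_contra hn0
    have := congrArg (eval α) hcancel
    simp [zero_pow hn0, haα, hB, hQ, Nat.cast_add_one_ne_zero] at this
  exact ⟨B, by rw [zero_add, pow_one], hB⟩

theorem isRoot_expResidue_of_exists [CharZero K] {κ : K} {r s a b : K[X]} {α : K}
    (hα : s.IsRoot α) (hs' : (derivative s).eval α ≠ 0) (hr : r.eval α ≠ 0)
    (hab : IsCoprime a b) (hb : b ≠ 0)
    (h : (derivative a * b - a * derivative b + C κ * a * b) * s ^ 2 = r * b ^ 2) :
    (expResidue κ r s).IsRoot α := by
  obtain ⟨Q, rfl⟩ := dvd_iff_isRoot.mpr hα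
  have hQ : Q.eval α ≠ 0 := by simpa [derivative_mul] using hs'
  obtain ⟨B, rfl, hB⟩ := exists_eq_X_sub_C_mul_of_pole hQ hr hab hb h
  -- `s · (a / b) = a Q / B` is regular at `α`.
  refine isRoot_expResidue_of_regular (A := a * Q) hα hB
    (mul_left_cancel₀ (pow_ne_zero 2 (X_sub_C_ne_zero α)) ?_)
  simp only [derivative_mul, derivative_X_sub_C] at h ⊢
  linear_combination h

theorem _root_.Squarefree.dvd_of_forall_isRoot [IsAlgClosed K] {s V : K[X]} (hs : Squarefree s)
    (h : ∀ α, s.IsRoot α → V.IsRoot α) : s ∣ V := by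
  rcases eq_or_ne V 0 with rfl | hV
  · exact dvd_zero s
  refine (IsAlgClosed.splits s).dvd_of_roots_le_roots hs.ne_zero ?_
  rw [Multiset.le_iff_subset (nodup_roots (PerfectField.separable_iff_squarefree.mpr hs))]
  intro α hα
  rw [mem_roots hV]
  exact h α (isRoot_of_mem_roots hα)

theorem exists_isCoprime_of_exists {κ : K} {r s : K[X]}
    (h : ∃ a b : K[X], b ≠ 0 ∧
      (derivative a * b - a * derivative b + C κ * a * b) * s ^ 2 = r * b ^ 2) :
    ∃ a b : K[X], IsCoprime a b ∧ b ≠ 0 ∧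
      (derivative a * b - a * derivative b + C κ * a * b) * s ^ 2 = r * b ^ 2 := by
  classical
  obtain ⟨a, b, hb, h⟩ := h
  obtain ⟨a₀, b₀, ha, hb₀, hu⟩ := extract_gcd a b
  generalize gcd a b = g at ha hb₀
  subst ha hb₀
  refine ⟨a₀, b₀, (gcd_isUnit_iff _ _).mp hu, right_ne_zero_of_mul hb,
    mul_left_cancel₀ (pow_ne_zero 2 (left_ne_zero_of_mul hb)) ?_⟩
  rw [derivative_mul, derivative_mul] at h
  linear_combination h

theorem dvd_expResidue_of_exists [IsAlgClosed K] [CharZero K] {κ : K} {r s : K[X]}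
    (hs : Squarefree s) (hrs : IsCoprime r s)
    (h : ∃ a b : K[X], b ≠ 0 ∧
      (derivative a * b - a * derivative b + C κ * a * b) * s ^ 2 = r * b ^ 2) :
    s ∣ expResidue κ r s := by
  obtain ⟨a, b, hab, hb, h⟩ := exists_isCoprime_of_exists h
  refine hs.dvd_of_forall_isRoot fun α hα => isRoot_expResidue_of_exists hα ?_ ?_ hab hb h
  · simpa [hα.eq_zero] using
      aeval_ne_zero_of_isCoprime (PerfectField.separable_iff_squarefree.mpr hs) α
  · simpa [hα.eq_zero] using aeval_ne_zero_of_isCoprime hrs α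

theorem exists_fraction_solution_iff_dvd_expResidue [IsAlgClosed K] [CharZero K] (κ : K)
    {r s : K[X]} (hs : Squarefree s) (hrs : IsCoprime r s) :
    (∃ a b : K[X], b ≠ 0 ∧
      (derivative a * b - a * derivative b + C κ * a * b) * s ^ 2 = r * b ^ 2) ↔
      s ∣ expResidue κ r s := by
  refine ⟨dvd_expResidue_of_exists hs hrs, fun h => ?_⟩
  obtain ⟨u, hu⟩ := exists_eq_of_dvd_expResidue (PerfectField.separable_iff_squarefree.mpr hs) h
  exact ⟨u, s, hs.ne_zero, by rw [← hu]⟩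

theorem degree_derivative_mul_le (f g : K[X]) : degree (derivative f * g) ≤ degree (f * g) := by
  rw [degree_mul, degree_mul]
  exact add_le_add_left degree_derivative_le _

theorem degree_derivative_mul_lt {f g : K[X]} (h : f * g ≠ 0) :
    degree (derivative f * g) < degree (f * g) := by
  rcases eq_or_ne (derivative f) 0 with hf | hf
  · rw [hf, zero_mul, degree_zero, bot_lt_iff_ne_bot, ne_eq, degree_eq_bot]
    exact h
  · rw [degree_mul, degree_mul]
    exact WithBot.add_lt_add_right (degree_ne_bot.mpr (right_ne_zero_of_mul h))
      (degree_derivative_lt (left_ne_zero_of_mul h))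

noncomputable def bilinearField (k : K) (p q : K[X]) : K[X] :=
  derivative (derivative p) * q - 4 * derivative p * derivative q
    + 4 * p * derivative (derivative q) + 2 * C k * (derivative p * q - 2 * derivative q * p)

theorem degree_bilinearField_lt (k : K) {p q : K[X]} (hp : p ≠ 0) (hq : q ≠ 0) :
    degree (bilinearField k p q) < degree (p * q) := by
  have hpq : p * q ≠ 0 := mul_ne_zero hp hq
  have hqp : q * p ≠ 0 := mul_ne_zero hq hp
  have add_smul_lt : ∀ u v : K[X], degree u < degree (p * q) → degree v < degree (p * q) →
      ∀ c : K, degree (u + c • v) < degree (p * q) := fun u v hu hv c =>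
    (degree_add_le _ _).trans_lt (max_lt hu ((degree_smul_le _ _).trans_lt hv))
  have hp₁ : degree (derivative p * q) < degree (p * q) := degree_derivative_mul_lt hpq
  have hq₁ : degree (derivative q * p) < degree (p * q) := by
    rw [mul_comm p q]
    exact degree_derivative_mul_lt hqp
  have hp₂ : degree (derivative (derivative p) * q) < degree (p * q) :=
    (degree_derivative_mul_le _ _).trans_lt hp₁
  have hq₂ : degree (derivative (derivative q) * p) < degree (p * q) :=
    (degree_derivative_mul_le _ _).trans_lt hq₁
  have hpq₁ : degree (derivative q * derivative p) < degree (p * q) :=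
    (degree_derivative_mul_le _ _).trans_lt (by rw [mul_comm]; exact hp₁)
  have expand : bilinearField k p q = derivative (derivative p) * q
      + (-4 : K) • (derivative q * derivative p) + (4 : K) • (derivative (derivative q) * p)
      + (2 * k) • (derivative p * q) + (-4 * k) • (derivative q * p) := by
    simp only [bilinearField, smul_eq_C_mul, map_neg, map_mul, map_ofNat]
    ring
  rw [expand]
  exact add_smul_lt _ _ (add_smul_lt _ _ (add_smul_lt _ _ (add_smul_lt _ _ hp₂ hpq₁ _) hq₂ _)
    hp₁ _) hq₁ _

theorem dvd_bilinearField_iff_right [CharZero K] (k : K) (p q : K[X]) :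
    q ∣ bilinearField k p q ↔ q ∣ expResidue k p q := by
  have expand : bilinearField k p q
      = q * (derivative (derivative p) + 2 * C k * derivative p) - C 4 * expResidue k p q := by
    simp only [bilinearField, expResidue, map_ofNat]
    ring
  rw [expand, dvd_sub_right (dvd_mul_right _ _)]
  exact (isUnit_C.mpr (Ne.isUnit (by norm_num))).dvd_mul_left

theorem dvd_bilinearField_iff_left (k : K) {p q : K[X]} (hpq : IsCoprime p q) :
    p ∣ bilinearField k p q ↔ p ∣ expResidue (-2 * k) (q ^ 4) p := by
  have expand : q ^ 3 * bilinearField k p q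
      = p * (q ^ 3 * (4 * derivative (derivative q) - 4 * C k * derivative q))
        - expResidue (-2 * k) (q ^ 4) p := by
    simp only [bilinearField, expResidue, derivative_pow, Nat.cast_ofNat, map_mul, map_neg,
      map_ofNat]
    ring
  calc p ∣ bilinearField k p q ↔ p ∣ q ^ 3 * bilinearField k p q :=
        ⟨fun h => h.mul_left _, hpq.pow_right.dvd_of_dvd_mul_left⟩
    _ ↔ p ∣ expResidue (-2 * k) (q ^ 4) p := by
        rw [expand, dvd_sub_right (dvd_mul_right _ _)]

end Polynomial

theorem rational_BA_integrals_iff_bilinear_field_general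
    (k : ℂ) (p q : ℂ[X])
    (hsp : Squarefree p) (hsq : Squarefree q) (hpq : IsCoprime p q) :
    ((∃ a b : ℂ[X], b ≠ 0 ∧
        ((derivative a * b - a * derivative b) + C k * a * b) * q ^ 2 = p * b ^ 2) ∧
     (∃ c d : ℂ[X], d ≠ 0 ∧
        ((derivative c * d - c * derivative d) - 2 * C k * c * d) * p ^ 2 = q ^ 4 * d ^ 2)) ↔
    derivative (derivative p) * q - 4 * derivative p * derivative q
        + 4 * p * derivative (derivative q)
        + 2 * C k * (derivative p * q - 2 * derivative q * p) = 0 := by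
  have hsecond : (∃ c d : ℂ[X], d ≠ 0 ∧
      ((derivative c * d - c * derivative d) - 2 * C k * c * d) * p ^ 2 = q ^ 4 * d ^ 2) ↔
      p ∣ expResidue (-2 * k) (q ^ 4) p := by
    rw [← exists_fraction_solution_iff_dvd_expResidue _ hsp hpq.symm.pow_left]
    simp only [map_mul, map_neg, map_ofNat, neg_mul, sub_eq_add_neg]
  rw [exists_fraction_solution_iff_dvd_expResidue k hsq hpq, hsecond,
    ← dvd_bilinearField_iff_right, ← dvd_bilinearField_iff_left k hpq]
  refine ⟨fun ⟨hq, hp⟩ => eq_zero_of_dvd_of_degree_lt (hpq.mul_dvd hp hq)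
    (degree_bilinearField_lt k hsp.ne_zero hsq.ne_zero), fun h => ?_⟩
  simp only [bilinearField, h, dvd_zero, and_self]

/-- Rationality of `exp(−kz)∫(p/q²)e^{kz}dz` and `exp(2kz)∫(q⁴/p²)e^{−2kz}dz`
(for squarefree coprime `p, q`) is equivalent to
`{p,q}_2 + 2k(p'q − 2q'p) = 0`. -/
theorem rational_BA_integrals_iff_bilinear_field
    (k : ℂ) (p q : ℂ[X]) (hp : p ≠ 0) (hq : q ≠ 0)
    (hsp : Squarefree p) (hsq : Squarefree q) (hpq : IsCoprime p q) :
    ((∃ a b : ℂ[X], b ≠ 0 ∧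
        ((derivative a * b - a * derivative b) + C k * a * b) * q ^ 2 = p * b ^ 2) ∧
     (∃ c d : ℂ[X], d ≠ 0 ∧
        ((derivative c * d - c * derivative d) - 2 * C k * c * d) * p ^ 2 = q ^ 4 * d ^ 2)) ↔
    derivative (derivative p) * q - 4 * derivative p * derivative q
        + 4 * p * derivative (derivative q)
        + 2 * C k * (derivative p * q - 2 * derivative q * p) = 0 :=
  rational_BA_integrals_iff_bilinear_field_general k p q hsp hsq hpq
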